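/- (Theorem 2.1, necessity) Fix real numbers a11, a12, a21, a22, σx, σy, R with a22 ≠ 0, R > 0. Let ε₀ > 0 and let ŝ, s̃, a, σX² : (0, ε₀) → ℝ be bounded functions such that for each ε: (i) the residual −ŝ(ε)²/R + 2*ã*(1 − ε*â)*ŝ(ε) + σs(ε)² is O(ε²) as ε → 0⁺; (ii) −s̃(ε)²/R + 2*a(ε)*s̃(ε) + σX²(ε) = 0 exactly. If lim_{ε→0⁺} (s̃(ε) − ŝ(ε))/ε = 0, then (σX²(ε) + 2*(a(ε) − ã*(1 − ε*â))*ŝ(ε) − σs(ε)²)/ε → 0 as ε → 0⁺; that is, σX²(ε) = −2*(a(ε) − ã*(1 − ε*â))*ŝ(ε) + σs(ε)² + o(ε) as ε → 0⁺. -/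
import Mathlib

open Filter

/-- `f = O(ε²)` as `ε → 0⁺`, with the bound holding inside `(0, ε₀)`. -/
def IsO2 (ε₀ : ℝ) (f : ℝ → ℝ) : Prop :=
  ∃ C ε₁ : ℝ, 0 < C ∧ 0 < ε₁ ∧ ε₁ ≤ ε₀ ∧ ∀ ε, 0 < ε → ε < ε₁ → |f ε| ≤ C * ε ^ 2

/-- `σs(ε)² := σx²(1 − 2εâ) + ε σy² a12²/a22²`. -/
noncomputable def sigs (a12 a21 a22 σx σy ε : ℝ) : ℝ :=
  σx ^ 2 * (1 - 2 * ε * (a12 * a21 / a22 ^ 2)) + ε * σy ^ 2 * a12 ^ 2 / a22 ^ 2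

/-- Theorem 2.1, necessity: if `(s̃ − ŝ)/ε → 0` as `ε → 0⁺`, then
`σX²` lies on the manifold up to `o(ε)`. -/
theorem stmt3 (a11 a12 a21 a22 σx σy R : ℝ) (ha22 : a22 ≠ 0) (hR : 0 < R)
    (ε₀ : ℝ) (hε₀ : 0 < ε₀) (shat stil a sigX2 : ℝ → ℝ)
    (hbdd : ∃ M : ℝ, ∀ ε, 0 < ε → ε < ε₀ →
      |shat ε| ≤ M ∧ |stil ε| ≤ M ∧ |a ε| ≤ M ∧ |sigX2 ε| ≤ M)
    (hres : IsO2 ε₀ (fun ε =>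
      -(shat ε) ^ 2 / R
        + 2 * (a11 - a12 * a21 / a22) * (1 - ε * (a12 * a21 / a22 ^ 2)) * shat ε
        + sigs a12 a21 a22 σx σy ε))
    (hric : ∀ ε, 0 < ε → ε < ε₀ →
      -(stil ε) ^ 2 / R + 2 * a ε * stil ε + sigX2 ε = 0)
    (hlim : Tendsto (fun ε => (stil ε - shat ε) / ε)
      (nhdsWithin 0 (Set.Ioi 0)) (nhds 0)) :
    Tendsto (fun ε =>
        (sigX2 ε
          + 2 * (a ε - (a11 - a12 * a21 / a22) * (1 - ε * (a12 * a21 / a22 ^ 2))) * shat ε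
          - sigs a12 a21 a22 σx σy ε) / ε)
      (nhdsWithin 0 (Set.Ioi 0)) (nhds 0) := by
  obtain ⟨M, hM⟩ := hbdd
  obtain ⟨C, ε₁, hC, hε₁, hε₁ε₀, hCb⟩ := hres
  have hM0 : 0 ≤ M := by
    have := hM (ε₀ / 2) (by positivity) (by linarith)
    exact le_trans (abs_nonneg _) this.1
  set K : ℝ := 2 * M / R + 2 * M with hK
  have hK0 : 0 ≤ K := by positivity
  apply (tendsto_zero_iff_abs_tendsto_zero _).mpr
  have hg : Tendsto (fun ε => K * |(stil ε - shat ε) / ε| + C * ε)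
      (nhdsWithin 0 (Set.Ioi 0)) (nhds 0) := by
    have h1 : Tendsto (fun ε => K * |(stil ε - shat ε) / ε|)
        (nhdsWithin 0 (Set.Ioi 0)) (nhds (K * |(0 : ℝ)|)) :=
      tendsto_const_nhds.mul hlim.abs
    have h2 : Tendsto (fun ε : ℝ => C * ε) (nhdsWithin 0 (Set.Ioi 0)) (nhds (C * 0)) :=
      tendsto_const_nhds.mul ((continuous_id.tendsto 0).mono_left nhdsWithin_le_nhds)
    simpa using h1.add h2
  refine squeeze_zero' (Eventually.of_forall fun _ => abs_nonneg _) ?_ hg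
  have hmem : Set.Ioo (0 : ℝ) (min ε₁ ε₀) ∈ nhdsWithin (0 : ℝ) (Set.Ioi 0) :=
    Ioo_mem_nhdsGT_of_mem ⟨le_refl 0, lt_min hε₁ hε₀⟩
  filter_upwards [hmem] with ε hε
  obtain ⟨hεp, hεlt⟩ := hε
  have hεε₀ : ε < ε₀ := lt_of_lt_of_le hεlt (min_le_right _ _)
  have hεε₁ : ε < ε₁ := lt_of_lt_of_le hεlt (min_le_left _ _)
  obtain ⟨hs, ht, haM, -⟩ := hM ε hεp hεε₀
  have hr := hCb ε hεp hεε₁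
  have hq := hric ε hεp hεε₀
  set r : ℝ := -(shat ε) ^ 2 / R
        + 2 * (a11 - a12 * a21 / a22) * (1 - ε * (a12 * a21 / a22 ^ 2)) * shat ε
        + sigs a12 a21 a22 σx σy ε with hrdef
  have heq : sigX2 ε
      + 2 * (a ε - (a11 - a12 * a21 / a22) * (1 - ε * (a12 * a21 / a22 ^ 2))) * shat ε
      - sigs a12 a21 a22 σx σy ε
      = ((stil ε + shat ε) / R - 2 * a ε) * (stil ε - shat ε) - r := by
    rw [hrdef]
    linear_combination hq
  have hcoef : |(stil ε + shat ε) / R - 2 * a ε| ≤ K := by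
    calc |(stil ε + shat ε) / R - 2 * a ε|
        ≤ |(stil ε + shat ε) / R| + |2 * a ε| := abs_sub _ _
      _ = (|stil ε + shat ε|) / R + 2 * |a ε| := by
          rw [abs_div, abs_of_pos hR, abs_mul]; norm_num
      _ ≤ (M + M) / R + 2 * M := by
          gcongr
          exact (abs_add_le _ _).trans (add_le_add ht hs)
      _ = K := by rw [hK]; ring
  have habs : |sigX2 ε
      + 2 * (a ε - (a11 - a12 * a21 / a22) * (1 - ε * (a12 * a21 / a22 ^ 2))) * shat ε
      - sigs a12 a21 a22 σx σy ε| ≤ K * |stil ε - shat ε| + C * ε ^ 2 := by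
    rw [heq]
    calc |((stil ε + shat ε) / R - 2 * a ε) * (stil ε - shat ε) - r|
        ≤ |((stil ε + shat ε) / R - 2 * a ε) * (stil ε - shat ε)| + |r| := abs_sub _ _
      _ = |(stil ε + shat ε) / R - 2 * a ε| * |stil ε - shat ε| + |r| := by rw [abs_mul]
      _ ≤ K * |stil ε - shat ε| + C * ε ^ 2 := add_le_add
          (mul_le_mul_of_nonneg_right hcoef (abs_nonneg _)) hr
  calc |(sigX2 ε
      + 2 * (a ε - (a11 - a12 * a21 / a22) * (1 - ε * (a12 * a21 / a22 ^ 2))) * shat ε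
      - sigs a12 a21 a22 σx σy ε) / ε|
      = |sigX2 ε
      + 2 * (a ε - (a11 - a12 * a21 / a22) * (1 - ε * (a12 * a21 / a22 ^ 2))) * shat ε
      - sigs a12 a21 a22 σx σy ε| / ε := by rw [abs_div, abs_of_pos hεp]
    _ ≤ (K * |stil ε - shat ε| + C * ε ^ 2) / ε := by gcongr
    _ = K * |(stil ε - shat ε) / ε| + C * ε := by
        rw [abs_div, abs_of_pos hεp]
        field_simp
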